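/- Fix n ≥ 1, real numbers (V_k)_{k ∈ B_n} with V_{2ℓ} + V_{2ℓ+1} ≠ 0 for all 0 ≤ ℓ ≤ 2^{n−1}−1, and suppose H_n and (RH)_{n−1} are invertible. Then for every k ∈ B_{n−1} with k ≠ 0: ⟨δ_{2k}, H_n^{−1} δ_0⟩ = 2 · (V_1/(V_0+V_1)) · (V_{2k+1}/(V_{2k}+V_{2k+1})) · ⟨δ_k, (RH)_{n−1}^{−1} δ_0⟩. -/

import Mathlib

open MeasureTheory ProbabilityTheory Matrix Filter Topology

noncomputable section

/-- Hierarchical (ultrametric) distance on `ℕ₀ = {0,1,2,…}`: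
`d(j,k) = min {r ≥ 0 | ⌊j/2^r⌋ = ⌊k/2^r⌋}`. -/
def hdist (j k : ℕ) : ℕ := sInf {r | j / 2 ^ r = k / 2 ^ r}

lemma hdist_comm (j k : ℕ) : hdist j k = hdist k j := by
  unfold hdist; congr 1; ext r; exact eq_comm

/-- Matrix entry of the hierarchical Laplacian `Δ = ∑_{r ≥ 1} p_r E_r`,
restricted to a block `B_n` (the entry only depends on the hierarchical distance):
`Δ(j,k) = ∑_{r ≥ max(1, d(j,k))} p_r · 2^{-r}`. -/
def lapEntry (p : ℕ → ℝ) (j k : ℕ) : ℝ :=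
  ∑' r : ℕ, if 1 ≤ r ∧ hdist j k ≤ r then p r / 2 ^ r else 0

/-- Matrix entry of the truncated Laplacian `∑_{r = 1}^{m} p_r E_r`. -/
def lapEntryT (p : ℕ → ℝ) (m : ℕ) (j k : ℕ) : ℝ :=
  ∑ r ∈ Finset.Icc 1 m, if hdist j k ≤ r then p r / 2 ^ r else 0

/-- The finite-volume Hamiltonian `H_n = 1_{B_n} (Δ + V) 1_{B_n}`
as a real symmetric `2^n × 2^n` matrix. -/
def Hmat (p : ℕ → ℝ) (v : ℕ → ℝ) (n : ℕ) : Matrix (Fin (2 ^ n)) (Fin (2 ^ n)) ℝ :=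
  fun j k => lapEntry p j k + if j = k then v j else 0

/-- The truncated finite-volume Hamiltonian
`H_{n,m} = 1_{B_n} (∑_{r=1}^m p_r E_r + V) 1_{B_n}`. -/
def HmatT (p : ℕ → ℝ) (v : ℕ → ℝ) (n m : ℕ) : Matrix (Fin (2 ^ n)) (Fin (2 ^ n)) ℝ :=
  fun j k => lapEntryT p m j k + if j = k then v j else 0

lemma Hmat_isHermitian (p : ℕ → ℝ) (v : ℕ → ℝ) (n : ℕ) : (Hmat p v n).IsHermitian := by
  refine Matrix.ext fun j k => ?_
  simp only [conjTranspose_apply, star_trivial, Hmat, lapEntry, hdist_comm (k : ℕ) (j : ℕ)]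
  rcases eq_or_ne j k with h | h
  · subst h; rfl
  · simp [h, h.symm]

lemma HmatT_isHermitian (p : ℕ → ℝ) (v : ℕ → ℝ) (n m : ℕ) : (HmatT p v n m).IsHermitian := by
  refine Matrix.ext fun j k => ?_
  simp only [conjTranspose_apply, star_trivial, HmatT, lapEntryT, hdist_comm (k : ℕ) (j : ℕ)]
  rcases eq_or_ne j k with h | h
  · subst h; rfl
  · simp [h, h.symm]

/-- The site `0 ∈ B_n`. -/
def fin0 (n : ℕ) : Fin (2 ^ n) := ⟨0, Nat.two_pow_pos n⟩

/-- `2k ∈ B_{n+1}` for `k ∈ B_n`. -/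
def dblFin {n : ℕ} (k : Fin (2 ^ n)) : Fin (2 ^ (n + 1)) :=
  ⟨2 * k, by have h := k.isLt; rw [pow_succ]; omega⟩

/-- `2k + 1 ∈ B_{n+1}` for `k ∈ B_n`. -/
def dblFin1 {n : ℕ} (k : Fin (2 ^ n)) : Fin (2 ^ (n + 1)) :=
  ⟨2 * k + 1, by have h := k.isLt; rw [pow_succ]; omega⟩

/-- Hopping sequence `(p_{r+1})_{r ≥ 1}` of the renormalized model. -/
def shiftSeq (p : ℕ → ℝ) : ℕ → ℝ := fun r => p (r + 1)

/-- The renormalized potential `(RV)_k = 2 V_{2k} V_{2k+1}/(V_{2k} + V_{2k+1}) + p_1`. -/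
def renPotM (p : ℕ → ℝ) (v : ℕ → ℝ) : ℕ → ℝ :=
  fun k => 2 * v (2 * k) * v (2 * k + 1) / (v (2 * k) + v (2 * k + 1)) + p 1

/-- The renormalized potential `(RV)_k = (1/(2 V_{2k}) + 1/(2 V_{2k+1}))⁻¹ + p_1`. -/
def renPotH (p : ℕ → ℝ) (v : ℕ → ℝ) : ℕ → ℝ :=
  fun k => (1 / (2 * v (2 * k)) + 1 / (2 * v (2 * k + 1)))⁻¹ + p 1

/-- The isometry `U_e : ℓ²(B_n) → ℓ²(B_{n+1})`, `U_e δ_k = (δ_{2k} + δ_{2k+1})/√2`,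
as a `2^{n+1} × 2^n` matrix. -/
def Uemat (n : ℕ) : Matrix (Fin (2 ^ (n + 1))) (Fin (2 ^ n)) ℝ :=
  fun j k => if (j : ℕ) = 2 * k then (Real.sqrt 2)⁻¹
    else if (j : ℕ) = 2 * k + 1 then (Real.sqrt 2)⁻¹ else 0

/-- The isometry `U_f : ℓ²(B_n) → ℓ²(B_{n+1})`, `U_f δ_k = (δ_{2k} - δ_{2k+1})/√2`,
as a `2^{n+1} × 2^n` matrix. -/
def Ufmat (n : ℕ) : Matrix (Fin (2 ^ (n + 1))) (Fin (2 ^ n)) ℝ :=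
  fun j k => if (j : ℕ) = 2 * k then (Real.sqrt 2)⁻¹
    else if (j : ℕ) = 2 * k + 1 then -(Real.sqrt 2)⁻¹ else 0

/-- The unitary `U = U_e ⊕ U_f : ℓ²(B_n) ⊕ ℓ²(B_n) → ℓ²(B_{n+1})`. -/
def Umat (n : ℕ) : Matrix (Fin (2 ^ (n + 1))) (Fin (2 ^ n) ⊕ Fin (2 ^ n)) ℝ :=
  Matrix.fromCols (Uemat n) (Ufmat n)

/-- `V_ff = V_ee`: multiplication by `(V_{2k} + V_{2k+1})/2` on `ℓ²(B_n)`. -/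
def Vffmat (v : ℕ → ℝ) (n : ℕ) : Matrix (Fin (2 ^ n)) (Fin (2 ^ n)) ℝ :=
  Matrix.diagonal fun k => (v (2 * k) + v (2 * k + 1)) / 2

/-- `V_fe = V_ef`: multiplication by `(V_{2k} - V_{2k+1})/2` on `ℓ²(B_n)`. -/
def Vfemat (v : ℕ → ℝ) (n : ℕ) : Matrix (Fin (2 ^ n)) (Fin (2 ^ n)) ℝ :=
  Matrix.diagonal fun k => (v (2 * k) - v (2 * k + 1)) / 2

/-- The operator `S = U_e^* - V_fe V_ff^{-1} U_f^* : ℓ²(B_{n+1}) → ℓ²(B_n)`. -/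
def Smat (v : ℕ → ℝ) (n : ℕ) : Matrix (Fin (2 ^ n)) (Fin (2 ^ (n + 1))) ℝ :=
  (Uemat n)ᵀ - Vfemat v n * (Vffmat v n)⁻¹ * (Ufmat n)ᵀ

/-- The maximally delocalized vector `φ_n = 2^{-n/2} 1_{B_n}`. -/
def phiVec (n : ℕ) : Fin (2 ^ n) → ℝ := fun _ => (Real.sqrt (2 ^ n))⁻¹

end

/-!
Let `x = H_{n+1}⁻¹ δ_0` and let `s_k = x_{2k} + x_{2k+1}` be its pair sums. Since
`(E_r x)_j = (E_{r-1} s)_{⌊j/2⌋} / 2` for `r ≥ 1` (with `E_0 = 1`), the Laplacian sees `x` only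
through `s`, and at the two sites of the pair `k` the equation `H_{n+1} x = δ_0` reads
  `L_k/2 + V_{2k} x_{2k} = δ_{k0}`,  `L_k/2 + V_{2k+1} x_{2k+1} = 0`,  where `L = (RΔ + p_1) s`.
Their difference gives `(V_{2k} + V_{2k+1}) x_{2k} = V_{2k+1} s_k` for `k ≠ 0`, and eliminating
`x_{2k}, x_{2k+1}` gives `(RH)_n s = 2 V_1/(V_0+V_1) δ_0`.
-/

lemma hdist_le_iff (j k r : ℕ) : hdist j k ≤ r ↔ j / 2 ^ r = k / 2 ^ r := by
  have hmono {a b : ℕ} (hab : a ≤ b) (h : j / 2 ^ a = k / 2 ^ a) : j / 2 ^ b = k / 2 ^ b := by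
    rw [← Nat.add_sub_cancel' hab, pow_add, ← Nat.div_div_eq_div_mul, ← Nat.div_div_eq_div_mul, h]
  have hne : {r | j / 2 ^ r = k / 2 ^ r}.Nonempty := by
    refine ⟨j + k, ?_⟩
    have hj : j < 2 ^ (j + k) :=
      Nat.lt_two_pow_self.trans_le (Nat.pow_le_pow_right two_pos (by omega))
    have hk : k < 2 ^ (j + k) :=
      Nat.lt_two_pow_self.trans_le (Nat.pow_le_pow_right two_pos (by omega))
    simp [Nat.div_eq_of_lt hj, Nat.div_eq_of_lt hk]
  exact ⟨fun h => hmono h (Nat.sInf_mem hne), fun h => Nat.sInf_le h⟩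

lemma hdist_le_zero_iff (j k : ℕ) : hdist j k ≤ 0 ↔ j = k := by
  rw [hdist_le_iff]
  simp

lemma hdist_le_succ_iff (j k r : ℕ) : hdist j k ≤ r + 1 ↔ hdist (j / 2) (k / 2) ≤ r := by
  simp only [hdist_le_iff, pow_succ', Nat.div_div_eq_div_mul]

lemma abs_ite_div_two_pow_le (c : Prop) [Decidable c] (a : ℝ) (r : ℕ) :
    |if c then a / 2 ^ r else 0| ≤ |a| := by
  split_ifs
  · rw [abs_div, abs_pow, abs_two]
    exact div_le_self (abs_nonneg a) (one_le_pow₀ one_le_two)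
  · simp

lemma lapEntry_eq_tsum_succ {p : ℕ → ℝ} (hp : Summable p) (j k : ℕ) :
    lapEntry p j k = ∑' r : ℕ, if hdist j k ≤ r + 1 then p (r + 1) / 2 ^ (r + 1) else 0 := by
  have hsum : Summable fun r : ℕ => if 1 ≤ r ∧ hdist j k ≤ r then p r / 2 ^ r else 0 :=
    hp.abs.of_norm_bounded fun r => abs_ite_div_two_pow_le _ _ r
  rw [lapEntry, hsum.tsum_eq_zero_add]
  simp

lemma lapEntry_congr_div_two (p : ℕ → ℝ) (j : ℕ) {k k' : ℕ} (h : k / 2 = k' / 2) :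
    lapEntry p j k = lapEntry p j k' := by
  refine tsum_congr fun r => ?_
  rcases r with _ | r
  · simp
  · simp only [hdist_le_succ_iff, h]

lemma two_mul_lapEntry {p : ℕ → ℝ} (hp : Summable p) (j k : ℕ) :
    2 * lapEntry p j k =
      (if j / 2 = k / 2 then p 1 else 0) + lapEntry (shiftSeq p) (j / 2) (k / 2) := by
  have hp' : Summable (shiftSeq p) := (summable_nat_add_iff 1).2 hp
  have hsum : Summable fun r : ℕ =>
      if hdist (j / 2) (k / 2) ≤ r then p (r + 1) / 2 ^ (r + 1) else 0 :=
    hp'.abs.of_norm_bounded fun r => abs_ite_div_two_pow_le _ _ _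
  rw [lapEntry_eq_tsum_succ hp, lapEntry_eq_tsum_succ hp']
  simp only [hdist_le_succ_iff]
  rw [hsum.tsum_eq_zero_add, mul_add, ← tsum_mul_left]
  congr 1
  · simp only [hdist_le_zero_iff]
    split_ifs <;> ring
  · refine tsum_congr fun r => ?_
    simp only [shiftSeq, hdist_le_succ_iff]
    split_ifs <;> ring

def halfFin {n : ℕ} (j : Fin (2 ^ (n + 1))) : Fin (2 ^ n) :=
  ⟨j / 2, by have := j.isLt; have := pow_succ 2 n; omega⟩

@[simp]
lemma halfFin_dblFin {n : ℕ} (k : Fin (2 ^ n)) : halfFin (dblFin k) = k :=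
  Fin.ext (by simp [halfFin, dblFin])

@[simp]
lemma halfFin_dblFin1 {n : ℕ} (k : Fin (2 ^ n)) : halfFin (dblFin1 k) = k :=
  Fin.ext (by simp [halfFin, dblFin1]; omega)

lemma dblFin_eq_fin0_iff {n : ℕ} (k : Fin (2 ^ n)) : dblFin k = fin0 (n + 1) ↔ k = fin0 n := by
  simp only [dblFin, fin0, Fin.ext_iff]
  omega

lemma dblFin1_ne_fin0 {n : ℕ} (k : Fin (2 ^ n)) : dblFin1 k ≠ fin0 (n + 1) := by
  simp only [dblFin1, fin0, ne_eq, Fin.ext_iff]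
  omega

lemma sum_univ_eq_sum_dblFin_add_dblFin1 {M : Type*} [AddCommMonoid M] {n : ℕ}
    (f : Fin (2 ^ (n + 1)) → M) :
    ∑ j, f j = ∑ k : Fin (2 ^ n), (f (dblFin k) + f (dblFin1 k)) := by
  rw [← (finProdFinEquiv.trans (finCongr (pow_succ 2 n).symm)).sum_comp f, Fintype.sum_prod_type]
  refine Finset.sum_congr rfl fun k _ => ?_
  rw [Fin.sum_univ_two]
  congr 2 <;> ext <;> simp [finProdFinEquiv, dblFin, dblFin1, mul_comm, add_comm]

def pairSum {n : ℕ} (x : Fin (2 ^ (n + 1)) → ℝ) : Fin (2 ^ n) → ℝ :=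
  fun k => x (dblFin k) + x (dblFin1 k)

lemma Hmat_mulVec_apply (p v : ℕ → ℝ) {n : ℕ} (x : Fin (2 ^ n) → ℝ) (j : Fin (2 ^ n)) :
    (Hmat p v n *ᵥ x) j = ∑ m : Fin (2 ^ n), lapEntry p j m * x m + v j * x j := by
  simp [mulVec, dotProduct, Hmat, add_mul, Finset.sum_add_distrib]

lemma sum_lapEntry_mul {p : ℕ → ℝ} (hp : Summable p) {n : ℕ} (x : Fin (2 ^ (n + 1)) → ℝ)
    (j : Fin (2 ^ (n + 1))) :
    ∑ m : Fin (2 ^ (n + 1)), lapEntry p j m * x m =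
      (Hmat (shiftSeq p) (fun _ => p 1) n *ᵥ pairSum x) (halfFin j) / 2 := by
  have hodd (k : Fin (2 ^ n)) : lapEntry p j (dblFin1 k) = lapEntry p j (dblFin k) :=
    lapEntry_congr_div_two p j (by simp only [dblFin, dblFin1]; omega)
  have heven (k : Fin (2 ^ n)) : lapEntry p j (dblFin k) =
      ((if halfFin j = k then p 1 else 0) + lapEntry (shiftSeq p) (halfFin j) k) / 2 := by
    have h := two_mul_lapEntry hp j (dblFin k)
    simp only [dblFin, halfFin, Fin.ext_iff, Nat.mul_div_cancel_left _ two_pos] at h ⊢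
    linarith
  have hpair (k : Fin (2 ^ n)) :
      lapEntry p j (dblFin k) * x (dblFin k) + lapEntry p j (dblFin1 k) * x (dblFin1 k) =
        ((if halfFin j = k then p 1 * pairSum x k else 0) +
          lapEntry (shiftSeq p) (halfFin j) k * pairSum x k) / 2 := by
    rw [hodd, heven, pairSum]
    split_ifs <;> ring
  rw [sum_univ_eq_sum_dblFin_add_dblFin1, Finset.sum_congr rfl fun k _ => hpair k,
    ← Finset.sum_div, Finset.sum_add_distrib, Finset.sum_ite_eq, if_pos (Finset.mem_univ _),
    Hmat_mulVec_apply, add_comm]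

lemma Hmat_succ_mulVec_apply {p : ℕ → ℝ} (hp : Summable p) (v : ℕ → ℝ) {n : ℕ}
    (x : Fin (2 ^ (n + 1)) → ℝ) (j : Fin (2 ^ (n + 1))) :
    (Hmat p v (n + 1) *ᵥ x) j =
      (Hmat (shiftSeq p) (fun _ => p 1) n *ᵥ pairSum x) (halfFin j) / 2 + v j * x j := by
  rw [Hmat_mulVec_apply, sum_lapEntry_mul hp]

section GreenFunction

variable {p : ℕ → ℝ} {v : ℕ → ℝ} {n : ℕ} {x : Fin (2 ^ (n + 1)) → ℝ}

lemma pair_equations_of_Hmat_mulVec_eq_single (hp : Summable p)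
    (hx : Hmat p v (n + 1) *ᵥ x = Pi.single (fin0 (n + 1)) 1) (k : Fin (2 ^ n)) :
    (Hmat (shiftSeq p) (fun _ => p 1) n *ᵥ pairSum x) k / 2 + v (2 * k) * x (dblFin k) =
        (if k = fin0 n then 1 else 0) ∧
      (Hmat (shiftSeq p) (fun _ => p 1) n *ᵥ pairSum x) k / 2 +
        v (2 * k + 1) * x (dblFin1 k) = 0 := by
  have heven := congrFun hx (dblFin k)
  have hodd := congrFun hx (dblFin1 k)
  rw [Hmat_succ_mulVec_apply hp, halfFin_dblFin] at heven
  rw [Hmat_succ_mulVec_apply hp, halfFin_dblFin1] at hodd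
  simp only [Pi.single_apply, dblFin_eq_fin0_iff] at heven
  rw [Pi.single_eq_of_ne (dblFin1_ne_fin0 k)] at hodd
  exact ⟨heven, hodd⟩

lemma Hmat_renPotM_mulVec_pairSum (hp : Summable p)
    (hv : ∀ k : ℕ, k < 2 ^ n → v (2 * k) + v (2 * k + 1) ≠ 0)
    (hx : Hmat p v (n + 1) *ᵥ x = Pi.single (fin0 (n + 1)) 1) :
    Hmat (shiftSeq p) (renPotM p v) n *ᵥ pairSum x =
      Pi.single (fin0 n) (2 * (v 1 / (v 0 + v 1))) := by
  ext k
  obtain ⟨heven, hodd⟩ := pair_equations_of_Hmat_mulVec_eq_single hp hx k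
  have hL := Hmat_mulVec_apply (shiftSeq p) (fun _ => p 1) (pairSum x) k
  have hsum := hv k k.isLt
  calc (Hmat (shiftSeq p) (renPotM p v) n *ᵥ pairSum x) k
      = 2 * (v (2 * k + 1) / (v (2 * k) + v (2 * k + 1))) * (if k = fin0 n then 1 else 0) := by
        rw [Hmat_mulVec_apply, renPotM]
        simp only [pairSum] at hL ⊢
        field_simp
        linear_combination 2 * v (2 * k + 1) * heven + 2 * v (2 * k) * hodd -
          (v (2 * k) + v (2 * k + 1)) * hL
    _ = (Pi.single (fin0 n) (2 * (v 1 / (v 0 + v 1))) : Fin (2 ^ n) → ℝ) k := by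
        rw [Pi.single_apply]
        split_ifs with hk
        · subst hk; simp [fin0]
        · simp

lemma mul_apply_dblFin_of_Hmat_mulVec_eq_single (hp : Summable p)
    (hx : Hmat p v (n + 1) *ᵥ x = Pi.single (fin0 (n + 1)) 1) {k : Fin (2 ^ n)}
    (hk : k ≠ fin0 n) :
    (v (2 * k) + v (2 * k + 1)) * x (dblFin k) = v (2 * k + 1) * pairSum x k := by
  obtain ⟨heven, hodd⟩ := pair_equations_of_Hmat_mulVec_eq_single hp hx k
  rw [if_neg hk] at heven
  rw [pairSum]
  linear_combination heven - hodd

end GreenFunction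

/-- **Green function recursion** (formula (14) in the proof of Theorem 5): for `n ≥ 1`
(written `n+1` here) and `k ∈ B_n \ {0}`,
`G_{n+1}(0, 2k; 0) = 2 (V_1/(V_0+V_1)) (V_{2k+1}/(V_{2k}+V_{2k+1})) · RG_n(0, k; 0)`. -/
theorem green_function_recursion (n : ℕ) (p : ℕ → ℝ) (hps : Summable p) (v : ℕ → ℝ)
    (hv : ∀ k : ℕ, k < 2 ^ n → v (2 * k) + v (2 * k + 1) ≠ 0)
    (hH : IsUnit (Hmat p v (n + 1)).det)
    (hRH : IsUnit (Hmat (shiftSeq p) (renPotM p v) n).det)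
    (k : Fin (2 ^ n)) (hk : (k : ℕ) ≠ 0) :
    (Hmat p v (n + 1))⁻¹ (dblFin k) (fin0 (n + 1)) =
      2 * (v 1 / (v 0 + v 1)) * (v (2 * k + 1) / (v (2 * k) + v (2 * k + 1))) *
        (Hmat (shiftSeq p) (renPotM p v) n)⁻¹ k (fin0 n) := by
  set x := (Hmat p v (n + 1))⁻¹ *ᵥ Pi.single (fin0 (n + 1)) 1 with hx_def
  have hx : Hmat p v (n + 1) *ᵥ x = Pi.single (fin0 (n + 1)) 1 := by
    rw [hx_def, mulVec_mulVec, mul_nonsing_inv _ hH, one_mulVec]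
  have hs : pairSum x k =
      2 * (v 1 / (v 0 + v 1)) * (Hmat (shiftSeq p) (renPotM p v) n)⁻¹ k (fin0 n) := by
    rw [← one_mulVec (pairSum x), ← nonsing_inv_mul _ hRH, ← mulVec_mulVec,
      Hmat_renPotM_mulVec_pairSum hps hv hx, mulVec_single, Pi.smul_apply, op_smul_eq_mul,
      col_apply, mul_comm]
  have hxk := mul_apply_dblFin_of_Hmat_mulVec_eq_single hps hx (k := k)
    fun h => hk (congrArg Fin.val h)
  have hentry : (Hmat p v (n + 1))⁻¹ (dblFin k) (fin0 (n + 1)) = x (dblFin k) := by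
    simp [hx_def]
  rw [hs] at hxk
  rw [hentry]
  have := hv k k.isLt
  field_simp
  linear_combination hxk
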